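/- arXiv:2408.16324 — 2 statements merged into one kernel-verified Lean document; each statement's English description precedes it below -/
import Mathlib

section
/- Let $\varphi_\lambda$ denote the eigenfunctions of a Chébli-Trimèche hypergroup (i.e. solutions of $u'' + (A'/A)u' = -(\lambda^2+\rho^2)u$, $u(0)=1$, $u'(0)=0$, with $A$ the density of purely exponential growth $2\rho$). If $|\operatorname{Im}\lambda| \le \rho$, then for all $r \ge 0$, $e^{(|\operatorname{Im}\lambda| - \rho) r} \le \varphi_{i \operatorname{Im}\lambda}(r) \le 1$. -/
open Real Filter

lemma lower_aux (A u : ℝ → ℝ) (ρ s : ℝ) (hρ : 0 < ρ)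
    (hAsmooth : ContDiff ℝ (⊤ : ℕ∞) A) (hA0 : A 0 = 0)
    (hApos : ∀ r > (0:ℝ), 0 < A r)
    (hA2 : ∀ r > (0:ℝ), 2 * ρ * A r ≤ deriv A r)
    (huC2 : ContDiff ℝ 2 u) (hu0 : u 0 = 1) (hu'0 : deriv u 0 = 0)
    (hODE' : ∀ x > (0:ℝ), A x * deriv (deriv u) x + deriv A x * deriv u x
        = (s^2 - ρ^2) * (A x * u x))
    (hs : |s| ≤ ρ) (b : ℝ) (hb : 0 ≤ b)
    (hpos : ∀ x ∈ Set.Ico (0:ℝ) b, 0 < u x) :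
    Real.exp ((|s| - ρ) * b) ≤ u b := by
  rcases eq_or_lt_of_le hb with rfl | hb
  · simp [hu0]
  have hsq : |s|^2 = s^2 := sq_abs s
  have hc : |s| - ρ ≤ 0 := by linarith
  have hucont : Continuous u := huC2.continuous
  have hu'cont : Continuous (deriv u) := huC2.continuous_deriv (by norm_num)
  have hu'diff : Differentiable ℝ (deriv u) := by
    have := (contDiff_succ_iff_deriv (n:=1)).mp (by exact_mod_cast huC2 : ContDiff ℝ (1+1:ℕ) u)
    exact this.2.2.differentiable one_ne_zero
  have hudiff : Differentiable ℝ u := huC2.differentiable (by norm_num)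
  have hAdiff : Differentiable ℝ A := hAsmooth.differentiable (by simp)
  set E : ℝ → ℝ := fun x => A x * Real.exp ((|s| - ρ) * x) * ((|s| - ρ) * u x - deriv u x)
    with hEdef
  have hEderiv : ∀ x ∈ Set.Ioo (0:ℝ) b, HasDerivAt E
      ((|s| - ρ) * u x * Real.exp ((|s| - ρ) * x) * (deriv A x - 2 * ρ * A x)) x := by
    intro x hx
    have hg : HasDerivAt (fun y => Real.exp ((|s| - ρ) * y))
        (Real.exp ((|s| - ρ) * x) * (|s| - ρ)) x := by
      simpa using ((hasDerivAt_id x).const_mul (|s| - ρ)).exp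
    have hE := (((hAdiff x).hasDerivAt.mul hg).mul
      (((hudiff x).hasDerivAt.const_mul (|s| - ρ)).sub (hu'diff x).hasDerivAt))
    refine hE.congr_deriv ?_
    symm
    simp only [Pi.mul_apply, Pi.sub_apply]
    have h1 := hODE' x hx.1
    linear_combination (Real.exp ((|s| - ρ) * x)) * h1
      - (A x * u x * Real.exp ((|s| - ρ) * x)) * hsq
  have hEanti : AntitoneOn E (Set.Icc 0 b) := by
    apply antitoneOn_of_deriv_nonpos (convex_Icc 0 b)
    · have hgc : Continuous fun x : ℝ => Real.exp ((|s| - ρ) * x) :=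
        Real.continuous_exp.comp (continuous_const.mul continuous_id)
      exact ((hAdiff.continuous.mul hgc).mul
        ((continuous_const.mul hucont).sub hu'cont)).continuousOn
    · intro x hx
      rw [interior_Icc] at hx
      exact ((hEderiv x hx).differentiableAt).differentiableWithinAt
    · intro x hx
      rw [interior_Icc] at hx
      rw [(hEderiv x hx).deriv]
      have h1 : (|s| - ρ) * u x * Real.exp ((|s| - ρ) * x) ≤ 0 :=
        mul_nonpos_of_nonpos_of_nonneg
          (mul_nonpos_of_nonpos_of_nonneg hc (hpos x ⟨hx.1.le, hx.2⟩).le)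
          (Real.exp_pos _).le
      have h2 : 0 ≤ deriv A x - 2 * ρ * A x := by linarith [hA2 x hx.1]
      exact mul_nonpos_of_nonpos_of_nonneg h1 h2
  have hE0 : E 0 = 0 := by simp [hEdef, hA0]
  have hEle : ∀ x ∈ Set.Ioo (0:ℝ) b, (|s| - ρ) * u x - deriv u x ≤ 0 := by
    intro x hx
    have := hEanti (Set.left_mem_Icc.2 hb.le) ⟨hx.1.le, hx.2.le⟩ hx.1.le
    rw [hE0] at this
    simp only [hEdef] at this
    have hgp : 0 < A x * Real.exp ((|s| - ρ) * x) :=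
      mul_pos (hApos x hx.1) (Real.exp_pos _)
    by_contra h
    push_neg at h
    nlinarith [mul_pos hgp h]
  -- F = u * exp(-(|s|-ρ)x) is monotone
  set F : ℝ → ℝ := fun x => u x * Real.exp (-((|s| - ρ) * x)) with hFdef
  have hFderiv : ∀ x : ℝ, HasDerivAt F
      ((deriv u x - (|s| - ρ) * u x) * Real.exp (-((|s| - ρ) * x))) x := by
    intro x
    have hg : HasDerivAt (fun y => Real.exp (-((|s| - ρ) * y)))
        (Real.exp (-((|s| - ρ) * x)) * (-(|s| - ρ))) x := by
      simpa using (((hasDerivAt_id x).const_mul (|s| - ρ)).neg).exp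
    have := (hudiff x).hasDerivAt.mul hg
    refine this.congr_deriv ?_
    ring
  have hFmono : MonotoneOn F (Set.Icc 0 b) := by
    apply monotoneOn_of_deriv_nonneg (convex_Icc 0 b)
    · exact (hucont.mul (by continuity)).continuousOn
    · intro x hx
      rw [interior_Icc] at hx
      exact (hFderiv x).differentiableAt.differentiableWithinAt
    · intro x hx
      rw [interior_Icc] at hx
      rw [(hFderiv x).deriv]
      have h1 := hEle x hx
      have := Real.exp_pos (-((|s| - ρ) * x))
      nlinarith
  have hF0 : F 0 = 1 := by simp [hFdef, hu0]
  have := hFmono (Set.left_mem_Icc.2 hb.le) (Set.right_mem_Icc.2 hb.le) hb.le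
  rw [hF0] at this
  simp only [hFdef] at this
  have hexp : Real.exp (-((|s| - ρ) * b)) * Real.exp ((|s| - ρ) * b) = 1 := by
    rw [← Real.exp_add]; simp
  have h3 : u b * Real.exp (-((|s| - ρ) * b)) * Real.exp ((|s| - ρ) * b) = u b := by
    rw [mul_assoc, hexp, mul_one]
  linarith [mul_le_mul_of_nonneg_right this (Real.exp_pos ((|s| - ρ) * b)).le, h3]

theorem stmt_12 (A u : ℝ → ℝ) (ρ s : ℝ) (hρ : 0 < ρ)
    (hAsmooth : ContDiff ℝ (⊤ : ℕ∞) A) (hA0 : A 0 = 0)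
    (hApos : ∀ r > (0:ℝ), 0 < A r)
    (hAquot : AntitoneOn (fun r => deriv A r / A r) (Set.Ioi 0))
    (hAlim : Tendsto (fun r => deriv A r / A r) atTop (nhds (2 * ρ)))
    (huC2 : ContDiff ℝ 2 u) (hu0 : u 0 = 1) (hu'0 : deriv u 0 = 0)
    (hODE : ∀ r > (0:ℝ),
      deriv (deriv u) r + (deriv A r / A r) * deriv u r = (s ^ 2 - ρ ^ 2) * u r)
    (hs : |s| ≤ ρ) :
    ∀ r ≥ (0:ℝ), Real.exp ((|s| - ρ) * r) ≤ u r ∧ u r ≤ 1 := by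
  have hsq : |s|^2 = s^2 := sq_abs s
  have hs2 : s^2 - ρ^2 ≤ 0 := by nlinarith [abs_nonneg s]
  have hucont : Continuous u := huC2.continuous
  have hu'cont : Continuous (deriv u) := huC2.continuous_deriv (by norm_num)
  have hu'diff : Differentiable ℝ (deriv u) := by
    have := (contDiff_succ_iff_deriv (n:=1)).mp (by exact_mod_cast huC2 : ContDiff ℝ (1+1:ℕ) u)
    exact this.2.2.differentiable one_ne_zero
  have hudiff : Differentiable ℝ u := huC2.differentiable (by norm_num)
  have hAdiff : Differentiable ℝ A := hAsmooth.differentiable (by simp)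
  -- A'/A ≥ 2ρ on (0,∞)
  have hA2 : ∀ r > (0:ℝ), 2 * ρ * A r ≤ deriv A r := by
    intro r hr
    have h1 : (2*ρ) ≤ deriv A r / A r := by
      refine le_of_tendsto hAlim ?_
      filter_upwards [eventually_ge_atTop r] with t ht
      exact hAquot (Set.mem_Ioi.2 hr) (Set.mem_Ioi.2 (hr.trans_le ht)) ht
    calc 2 * ρ * A r ≤ (deriv A r / A r) * A r :=
          mul_le_mul_of_nonneg_right h1 (hApos r hr).le
      _ = deriv A r := div_mul_cancel₀ _ (hApos r hr).ne'
  -- ODE multiplied by A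
  have hODE' : ∀ x > (0:ℝ), A x * deriv (deriv u) x + deriv A x * deriv u x
      = (s^2 - ρ^2) * (A x * u x) := by
    intro x hx
    have h := hODE x hx
    have hAx : A x ≠ 0 := (hApos x hx).ne'
    field_simp at h
    linear_combination h
  -- positivity of u
  have hupos : ∀ r ≥ (0:ℝ), 0 < u r := by
    by_contra h
    push_neg at h
    obtain ⟨t, ht0, ht⟩ := h
    set S : Set ℝ := {x | 0 ≤ x ∧ u x ≤ 0} with hSdef
    have hSne : S.Nonempty := ⟨t, ht0, ht⟩
    have hSbdd : BddBelow S := ⟨0, fun x hx => hx.1⟩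
    have hSclosed : IsClosed S :=
      (isClosed_Ici.preimage continuous_id).inter (isClosed_Iic.preimage hucont)
    have hbS : sInf S ∈ S := hSclosed.csInf_mem hSne hSbdd
    set b := sInf S with hbdef
    have hb0 : 0 ≤ b := hbS.1
    have hub : u b ≤ 0 := hbS.2
    have hpos : ∀ x ∈ Set.Ico (0:ℝ) b, 0 < u x := by
      intro x hx
      by_contra hneg
      push_neg at hneg
      exact absurd (csInf_le hSbdd ⟨hx.1, hneg⟩) (not_le.2 hx.2)
    have := lower_aux A u ρ s hρ hAsmooth hA0 hApos hA2 huC2 hu0 hu'0 hODE' hs b hb0 hpos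
    linarith [Real.exp_pos ((|s| - ρ) * b)]
  intro r hr
  constructor
  · exact lower_aux A u ρ s hρ hAsmooth hA0 hApos hA2 huC2 hu0 hu'0 hODE' hs r hr
      (fun x hx => hupos x hx.1)
  -- upper bound
  · rcases eq_or_lt_of_le hr with rfl | hr
    · simp [hu0]
    have hvderiv : ∀ x ∈ Set.Ioo (0:ℝ) r, HasDerivAt (fun y => A y * deriv u y)
        ((s^2 - ρ^2) * (A x * u x)) x := by
      intro x hx
      have := (hAdiff x).hasDerivAt.mul (hu'diff x).hasDerivAt
      refine this.congr_deriv ?_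
      symm
      linear_combination - hODE' x hx.1
    have hvanti : AntitoneOn (fun y => A y * deriv u y) (Set.Icc 0 r) := by
      apply antitoneOn_of_deriv_nonpos (convex_Icc 0 r)
      · exact (hAdiff.continuous.mul hu'cont).continuousOn
      · intro x hx
        rw [interior_Icc] at hx
        exact (hvderiv x hx).differentiableAt.differentiableWithinAt
      · intro x hx
        rw [interior_Icc] at hx
        rw [(hvderiv x hx).deriv]
        exact mul_nonpos_of_nonpos_of_nonneg hs2
          (mul_nonneg (hApos x hx.1).le (hupos x hx.1.le).le)
    have hu'le : ∀ x ∈ Set.Ioo (0:ℝ) r, deriv u x ≤ 0 := by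
      intro x hx
      have := hvanti (Set.left_mem_Icc.2 hr.le) ⟨hx.1.le, hx.2.le⟩ hx.1.le
      simp only [hA0, zero_mul] at this
      exact nonpos_of_mul_nonpos_right this (hApos x hx.1)
    have huanti : AntitoneOn u (Set.Icc 0 r) := by
      apply antitoneOn_of_deriv_nonpos (convex_Icc 0 r) hucont.continuousOn
      · intro x hx
        exact (hudiff x).differentiableWithinAt
      · intro x hx
        rw [interior_Icc] at hx
        exact hu'le x hx
    have := huanti (Set.left_mem_Icc.2 hr.le) (Set.right_mem_Icc.2 hr.le) hr.le
    rwa [hu0] at this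
end

section
/- Let $\rho > 0$, $t > 0$, and consider $F(\lambda) = e^{-t(\lambda^2 + \rho^2)}$ for $\lambda \in \mathbb{R}$. Suppose $w : (0,\infty) \to (0,\infty)$ is measurable and satisfies $c_1 \lambda^{2\mu+1} \le w(\lambda) \le c_2 \lambda^{2\mu+1}$ for $\lambda \le K$ and $c_1 \lambda^{2\alpha+1} \le w(\lambda) \le c_2 \lambda^{2\alpha+1}$ for $\lambda > K$, where $0 < c_1 \le c_2$, $K > 0$, $\mu = 1/2$, $\alpha \ge 1/2$. Then there exist constants $0 < C_1 \le C_2$ and $T \ge 1$ such that for all $t \ge T$: $C_1 e^{-2t\rho^2} t^{-(\mu+1)} \le \int_0^\infty F(\lambda)^2 w(\lambda)\,d\lambda \le C_2 e^{-2t\rho^2} t^{-(\mu+1)}$, and for all $0 < t \le 1$: $C_1 t^{-(\alpha+1)} \le \int_0^\infty F(\lambda)^2 w(\lambda)\,d\lambda \le C_2 t^{-(\alpha+1)}$. -/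
open Real MeasureTheory Set

private lemma gp_int {p b : ℝ} (hp : -1 < p) (hb : 0 < b) :
    Integrable (fun u : ℝ => u ^ p * Real.exp (-b * u ^ 2)) :=
  integrable_rpow_mul_exp_neg_mul_sq hb hp

private lemma scale_int {p t : ℝ} (ht : 0 < t) (a : ℝ) (ha : 0 ≤ a) :
    ∫ x in Ioi a, x ^ p * Real.exp (-(2*t) * x ^ 2)
      = t ^ (-((p+1)/2)) * ∫ u in Ioi (Real.sqrt t * a),
          u ^ p * Real.exp (-(2:ℝ) * u ^ 2) := by
  have hb : 0 < Real.sqrt t := Real.sqrt_pos.mpr ht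
  have h1 : ∫ x in Ioi a, x ^ p * Real.exp (-(2*t) * x ^ 2)
      = ∫ x in Ioi a, (Real.sqrt t) ^ (-p) *
        ((Real.sqrt t * x) ^ p * Real.exp (-(2:ℝ) * (Real.sqrt t * x) ^ 2)) := by
    refine setIntegral_congr_fun measurableSet_Ioi (fun x hx => ?_)
    have hx0 : 0 ≤ x := le_trans ha (le_of_lt hx)
    rw [Real.mul_rpow hb.le hx0, mul_pow, Real.sq_sqrt ht.le, ← mul_assoc, ← mul_assoc,
      ← Real.rpow_add hb, neg_add_cancel, Real.rpow_zero, one_mul]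
    congr 2
    ring
  rw [h1, integral_const_mul,
    integral_comp_mul_left_Ioi (fun u => u ^ p * Real.exp (-(2:ℝ) * u ^ 2)) a hb,
    smul_eq_mul, ← mul_assoc]
  congr 1
  rw [← Real.rpow_neg_one (Real.sqrt t), ← Real.rpow_add hb, Real.sqrt_eq_rpow,
    ← Real.rpow_mul ht.le]
  congr 1
  ring

private lemma split_Ioc {f : ℝ → ℝ} (hf : IntegrableOn f (Ioi 0)) {a : ℝ} (ha : 0 ≤ a) :
    ∫ x in Ioc 0 a, f x = (∫ x in Ioi 0, f x) - ∫ x in Ioi a, f x := by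
  have h := setIntegral_union (Ioc_disjoint_Ioi le_rfl) measurableSet_Ioi
      (hf.mono_set Ioc_subset_Ioi_self) (hf.mono_set (Ioi_subset_Ioi ha)) (μ := volume)
  rw [Ioc_union_Ioi_eq_Ioi ha] at h
  linarith

private lemma pos_Ioc {p K : ℝ} (hK : 0 < K) (hp : -1 < p) :
    0 < ∫ u in Ioc 0 K, u ^ p * Real.exp (-(2:ℝ) * u ^ 2) := by
  refine (setIntegral_pos_iff_support_of_nonneg_ae ?_ ?_).mpr ?_
  · filter_upwards [ae_restrict_mem measurableSet_Ioc] with u hu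
    exact (mul_pos (Real.rpow_pos_of_pos hu.1 p) (Real.exp_pos _)).le
  · exact (gp_int hp two_pos).integrableOn
  · refine lt_of_lt_of_le ?_ (measure_mono (fun u hu => ⟨?_, hu⟩))
    · simp [Real.volume_Ioc, hK]
    · exact ne_of_gt (mul_pos (Real.rpow_pos_of_pos hu.1 p) (Real.exp_pos _))

private lemma pos_Ioi {p K : ℝ} (hK : 0 < K) (hp : -1 < p) :
    0 < ∫ u in Ioi K, u ^ p * Real.exp (-(2:ℝ) * u ^ 2) := by
  refine (setIntegral_pos_iff_support_of_nonneg_ae ?_ ?_).mpr ?_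
  · filter_upwards [ae_restrict_mem measurableSet_Ioi] with u hu
    exact (mul_pos (Real.rpow_pos_of_pos (hK.trans hu) p) (Real.exp_pos _)).le
  · exact (gp_int hp two_pos).integrableOn
  · refine lt_of_lt_of_le ?_ (measure_mono (fun u hu => ⟨?_, hu⟩))
    · simp [Real.volume_Ioi]
    · exact ne_of_gt (mul_pos (Real.rpow_pos_of_pos (hK.trans hu) p) (Real.exp_pos _))
set_option maxHeartbeats 1000000 in
theorem stmt_16 (ρ K c₁ c₂ α : ℝ) (w : ℝ → ℝ)
    (hρ : 0 < ρ) (hK : 0 < K) (hc₁ : 0 < c₁) (hc₁₂ : c₁ ≤ c₂) (hα : (1:ℝ)/2 ≤ α)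
    (hw : Measurable w) (hwpos : ∀ lam > (0:ℝ), 0 < w lam)
    (hwlow : ∀ lam : ℝ, 0 < lam → lam ≤ K →
      c₁ * lam ^ (2 * ((1:ℝ)/2) + 1) ≤ w lam ∧ w lam ≤ c₂ * lam ^ (2 * ((1:ℝ)/2) + 1))
    (hwhigh : ∀ lam : ℝ, K < lam →
      c₁ * lam ^ (2 * α + 1) ≤ w lam ∧ w lam ≤ c₂ * lam ^ (2 * α + 1)) :
    ∃ C₁ C₂ T : ℝ, 0 < C₁ ∧ C₁ ≤ C₂ ∧ 1 ≤ T ∧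
      (∀ t ≥ T,
        C₁ * Real.exp (-(2 * t * ρ ^ 2)) * t ^ (-((1:ℝ)/2 + 1)) ≤
          (∫ lam in Set.Ioi (0:ℝ), (Real.exp (-(t * (lam ^ 2 + ρ ^ 2)))) ^ 2 * w lam) ∧
        (∫ lam in Set.Ioi (0:ℝ), (Real.exp (-(t * (lam ^ 2 + ρ ^ 2)))) ^ 2 * w lam) ≤
          C₂ * Real.exp (-(2 * t * ρ ^ 2)) * t ^ (-((1:ℝ)/2 + 1))) ∧
      (∀ t : ℝ, 0 < t → t ≤ 1 →
        C₁ * t ^ (-(α + 1)) ≤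
          (∫ lam in Set.Ioi (0:ℝ), (Real.exp (-(t * (lam ^ 2 + ρ ^ 2)))) ^ 2 * w lam) ∧
        (∫ lam in Set.Ioi (0:ℝ), (Real.exp (-(t * (lam ^ 2 + ρ ^ 2)))) ^ 2 * w lam) ≤
          C₂ * t ^ (-(α + 1))) := by
  have hc₂ : 0 < c₂ := lt_of_lt_of_le hc₁ hc₁₂
  set p2 : ℝ := 2 * ((1:ℝ)/2) + 1 with hp2def
  set pa : ℝ := 2 * α + 1 with hpadef
  have hp2 : (-1:ℝ) < p2 := by rw [hp2def]; norm_num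
  have hpa : (-1:ℝ) < pa := by rw [hpadef]; linarith
  have he2 : -((p2+1)/2) = -((1:ℝ)/2 + 1) := by rw [hp2def]; norm_num
  have hea : -((pa+1)/2) = -(α + 1) := by rw [hpadef]; ring
  set G2 : ℝ := ∫ u in Ioi (0:ℝ), u ^ p2 * Real.exp (-(2:ℝ) * u ^ 2) with hG2
  set G2K : ℝ := ∫ u in Ioi K, u ^ p2 * Real.exp (-(2:ℝ) * u ^ 2) with hG2K
  set Ga : ℝ := ∫ u in Ioi (0:ℝ), u ^ pa * Real.exp (-(2:ℝ) * u ^ 2) with hGa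
  set GaK : ℝ := ∫ u in Ioi K, u ^ pa * Real.exp (-(2:ℝ) * u ^ 2) with hGaK
  have hG2sub : 0 < G2 - G2K := by
    have h := pos_Ioc hK hp2
    rwa [split_Ioc ((gp_int hp2 two_pos).integrableOn) hK.le, ← hG2, ← hG2K] at h
  have hGaKpos : 0 < GaK := pos_Ioi hK hpa
  have hG2nn : 0 ≤ G2 := setIntegral_nonneg measurableSet_Ioi fun u hu =>
    (mul_pos (Real.rpow_pos_of_pos hu p2) (Real.exp_pos _)).le
  have hGann : 0 ≤ Ga := setIntegral_nonneg measurableSet_Ioi fun u hu =>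
    (mul_pos (Real.rpow_pos_of_pos hu pa) (Real.exp_pos _)).le
  -- pointwise upper bound
  have hptw : ∀ t l : ℝ, 0 < l → Real.exp (-(2*t) * l ^ 2) * w l
      ≤ c₂ * (l ^ p2 * Real.exp (-(2*t) * l ^ 2) + l ^ pa * Real.exp (-(2*t) * l ^ 2)) := by
    intro t l hl
    have hE : (0:ℝ) ≤ Real.exp (-(2*t) * l ^ 2) := (Real.exp_pos _).le
    rcases le_or_gt l K with hlK | hlK
    · have h := (hwlow l hl hlK).2
      have h2n : 0 ≤ l ^ pa * Real.exp (-(2*t) * l ^ 2) :=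
        mul_nonneg (Real.rpow_nonneg hl.le _) hE
      nlinarith [mul_le_mul_of_nonneg_left h hE, mul_nonneg hc₂.le h2n]
    · have h := (hwhigh l hlK).2
      have h2n : 0 ≤ l ^ p2 * Real.exp (-(2*t) * l ^ 2) :=
        mul_nonneg (Real.rpow_nonneg hl.le _) hE
      nlinarith [mul_le_mul_of_nonneg_left h hE, mul_nonneg hc₂.le h2n]
  -- integrability
  have hJint : ∀ t : ℝ, 0 < t →
      IntegrableOn (fun l : ℝ => Real.exp (-(2*t) * l ^ 2) * w l) (Ioi 0) := by
    intro t ht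
    have h2 : Integrable (fun l : ℝ => l ^ p2 * Real.exp (-(2*t) * l ^ 2)) :=
      gp_int hp2 (by positivity)
    have ha2 : Integrable (fun l : ℝ => l ^ pa * Real.exp (-(2*t) * l ^ 2)) :=
      gp_int hpa (by positivity)
    refine Integrable.mono' (((h2.add ha2).const_mul c₂).integrableOn)
      ((Measurable.mul ?_ hw).aestronglyMeasurable) ?_
    · exact ((measurable_id.pow_const 2).const_mul (-(2*t))).exp
    · filter_upwards [ae_restrict_mem measurableSet_Ioi] with l hl
      have hE : (0:ℝ) ≤ Real.exp (-(2*t) * l ^ 2) := (Real.exp_pos _).le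
      rw [Real.norm_eq_abs, abs_of_nonneg (mul_nonneg hE (hwpos l hl).le)]
      exact hptw t l hl
  have hJnn : ∀ t : ℝ, 0 ≤ ∫ lam in Ioi (0:ℝ), Real.exp (-(2*t) * lam ^ 2) * w lam :=
    fun t => setIntegral_nonneg measurableSet_Ioi fun l hl =>
      mul_nonneg (Real.exp_pos _).le (hwpos l hl).le
  -- rewrite main integral
  have hIeq : ∀ t : ℝ, (∫ lam in Ioi (0:ℝ), (Real.exp (-(t * (lam ^ 2 + ρ ^ 2)))) ^ 2 * w lam)
      = Real.exp (-(2*t*ρ^2)) * ∫ lam in Ioi (0:ℝ), Real.exp (-(2*t) * lam ^ 2) * w lam := by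
    intro t
    rw [← integral_const_mul]
    refine setIntegral_congr_fun measurableSet_Ioi (fun lam _ => ?_)
    have h : (Real.exp (-(t * (lam ^ 2 + ρ ^ 2)))) ^ 2
        = Real.exp (-(2*t*ρ^2)) * Real.exp (-(2*t) * lam ^ 2) := by
      rw [pow_two, ← Real.exp_add, ← Real.exp_add, Real.exp_eq_exp]
      ring
    rw [h]; ring
  -- upper bound on J
  have hJup : ∀ t : ℝ, 0 < t → (∫ lam in Ioi (0:ℝ), Real.exp (-(2*t) * lam ^ 2) * w lam)
      ≤ c₂ * (t ^ (-((p2+1)/2)) * G2 + t ^ (-((pa+1)/2)) * Ga) := by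
    intro t ht
    have h2 : Integrable (fun l : ℝ => l ^ p2 * Real.exp (-(2*t) * l ^ 2)) :=
      gp_int hp2 (by positivity)
    have ha2 : Integrable (fun l : ℝ => l ^ pa * Real.exp (-(2*t) * l ^ 2)) :=
      gp_int hpa (by positivity)
    have hmono : (∫ lam in Ioi (0:ℝ), Real.exp (-(2*t) * lam ^ 2) * w lam)
        ≤ ∫ lam in Ioi (0:ℝ), c₂ * (lam ^ p2 * Real.exp (-(2*t) * lam ^ 2)
            + lam ^ pa * Real.exp (-(2*t) * lam ^ 2)) :=
      setIntegral_mono_on (hJint t ht) (((h2.add ha2).const_mul c₂).integrableOn)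
        measurableSet_Ioi (fun l hl => hptw t l hl)
    rwa [integral_const_mul, integral_add h2.integrableOn ha2.integrableOn,
      scale_int ht 0 le_rfl, scale_int ht 0 le_rfl, mul_zero, ← hG2, ← hGa] at hmono
  -- lower bound, large t
  have hJlow1 : ∀ t : ℝ, 1 ≤ t → c₁ * (t ^ (-((p2+1)/2)) * (G2 - G2K))
      ≤ ∫ lam in Ioi (0:ℝ), Real.exp (-(2*t) * lam ^ 2) * w lam := by
    intro t ht1
    have ht : (0:ℝ) < t := lt_of_lt_of_le one_pos ht1
    have h2 : Integrable (fun l : ℝ => l ^ p2 * Real.exp (-(2*t) * l ^ 2)) :=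
      gp_int hp2 (by positivity)
    have hst : (1:ℝ) ≤ Real.sqrt t := by
      rw [show (1:ℝ) = Real.sqrt 1 by simp]; exact Real.sqrt_le_sqrt ht1
    have hA : (∫ l in Ioc (0:ℝ) K, c₁ * (l ^ p2 * Real.exp (-(2*t) * l ^ 2)))
        ≤ ∫ l in Ioc (0:ℝ) K, Real.exp (-(2*t) * l ^ 2) * w l := by
      refine setIntegral_mono_on ((h2.const_mul c₁).integrableOn)
        ((hJint t ht).mono_set Ioc_subset_Ioi_self) measurableSet_Ioc (fun l hl => ?_)
      have hE : (0:ℝ) ≤ Real.exp (-(2*t) * l ^ 2) := (Real.exp_pos _).le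
      nlinarith [mul_le_mul_of_nonneg_right (hwlow l hl.1 hl.2).1 hE]
    have hB : (∫ l in Ioc (0:ℝ) K, Real.exp (-(2*t) * l ^ 2) * w l)
        ≤ ∫ lam in Ioi (0:ℝ), Real.exp (-(2*t) * lam ^ 2) * w lam := by
      refine setIntegral_mono_set (hJint t ht) ?_
        (HasSubset.Subset.eventuallyLE Ioc_subset_Ioi_self)
      filter_upwards [ae_restrict_mem measurableSet_Ioi] with l hl
      exact mul_nonneg (Real.exp_pos _).le (hwpos l hl).le
    have hC : (∫ l in Ioc (0:ℝ) K, c₁ * (l ^ p2 * Real.exp (-(2*t) * l ^ 2)))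
        = c₁ * (t ^ (-((p2+1)/2)) * G2 - t ^ (-((p2+1)/2)) *
            ∫ u in Ioi (Real.sqrt t * K), u ^ p2 * Real.exp (-(2:ℝ) * u ^ 2)) := by
      rw [integral_const_mul, split_Ioc h2.integrableOn hK.le, scale_int ht 0 le_rfl,
        scale_int ht K hK.le, mul_zero, ← hG2]
    have hD : (∫ u in Ioi (Real.sqrt t * K), u ^ p2 * Real.exp (-(2:ℝ) * u ^ 2)) ≤ G2K := by
      refine setIntegral_mono_set (gp_int hp2 two_pos).integrableOn ?_
        (HasSubset.Subset.eventuallyLE (Ioi_subset_Ioi (le_mul_of_one_le_left hK.le hst)))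
      filter_upwards [ae_restrict_mem measurableSet_Ioi] with u hu
      exact mul_nonneg (Real.rpow_nonneg (hK.trans hu).le _) (Real.exp_pos _).le
    have hexp2 : (0:ℝ) ≤ t ^ (-((p2+1)/2)) := Real.rpow_nonneg ht.le _
    have hcomb : c₁ * (t ^ (-((p2+1)/2)) * (G2 - G2K))
        ≤ ∫ l in Ioc (0:ℝ) K, c₁ * (l ^ p2 * Real.exp (-(2*t) * l ^ 2)) := by
      rw [hC]
      nlinarith [mul_le_mul_of_nonneg_left hD hexp2]
    exact le_trans hcomb (le_trans hA hB)
  -- lower bound, small t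
  have hJlow2 : ∀ t : ℝ, 0 < t → t ≤ 1 → c₁ * (t ^ (-((pa+1)/2)) * GaK)
      ≤ ∫ lam in Ioi (0:ℝ), Real.exp (-(2*t) * lam ^ 2) * w lam := by
    intro t ht ht1
    have ha2 : Integrable (fun l : ℝ => l ^ pa * Real.exp (-(2*t) * l ^ 2)) :=
      gp_int hpa (by positivity)
    have hst : Real.sqrt t ≤ 1 := by
      rw [show (1:ℝ) = Real.sqrt 1 by simp]; exact Real.sqrt_le_sqrt ht1
    have hA : (∫ l in Ioi K, c₁ * (l ^ pa * Real.exp (-(2*t) * l ^ 2)))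
        ≤ ∫ l in Ioi K, Real.exp (-(2*t) * l ^ 2) * w l := by
      refine setIntegral_mono_on ((ha2.const_mul c₁).integrableOn)
        ((hJint t ht).mono_set (Ioi_subset_Ioi hK.le)) measurableSet_Ioi (fun l hl => ?_)
      have hE : (0:ℝ) ≤ Real.exp (-(2*t) * l ^ 2) := (Real.exp_pos _).le
      nlinarith [mul_le_mul_of_nonneg_right (hwhigh l hl).1 hE]
    have hB : (∫ l in Ioi K, Real.exp (-(2*t) * l ^ 2) * w l)
        ≤ ∫ lam in Ioi (0:ℝ), Real.exp (-(2*t) * lam ^ 2) * w lam := by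
      refine setIntegral_mono_set (hJint t ht) ?_
        (HasSubset.Subset.eventuallyLE (Ioi_subset_Ioi hK.le))
      filter_upwards [ae_restrict_mem measurableSet_Ioi] with l hl
      exact mul_nonneg (Real.exp_pos _).le (hwpos l hl).le
    have hC : (∫ l in Ioi K, c₁ * (l ^ pa * Real.exp (-(2*t) * l ^ 2)))
        = c₁ * (t ^ (-((pa+1)/2)) *
            ∫ u in Ioi (Real.sqrt t * K), u ^ pa * Real.exp (-(2:ℝ) * u ^ 2)) := by
      rw [integral_const_mul, scale_int ht K hK.le]
    have hD : GaK ≤ ∫ u in Ioi (Real.sqrt t * K), u ^ pa * Real.exp (-(2:ℝ) * u ^ 2) := by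
      rw [hGaK]
      refine setIntegral_mono_set (gp_int hpa two_pos).integrableOn ?_
        (HasSubset.Subset.eventuallyLE (Ioi_subset_Ioi (mul_le_of_le_one_left hK.le hst)))
      filter_upwards [ae_restrict_mem measurableSet_Ioi] with u hu
      have hu0 : 0 < u := lt_of_le_of_lt (mul_nonneg (Real.sqrt_nonneg t) hK.le) hu
      exact mul_nonneg (Real.rpow_nonneg hu0.le _) (Real.exp_pos _).le
    have hexpa : (0:ℝ) ≤ t ^ (-((pa+1)/2)) := Real.rpow_nonneg ht.le _
    have hcomb : c₁ * (t ^ (-((pa+1)/2)) * GaK)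
        ≤ ∫ l in Ioi K, c₁ * (l ^ pa * Real.exp (-(2*t) * l ^ 2)) := by
      rw [hC]
      nlinarith [mul_le_mul_of_nonneg_left hD hexpa]
    exact le_trans hcomb (le_trans hA hB)
  -- constants
  refine ⟨min (c₁ * (G2 - G2K)) (c₁ * Real.exp (-(2*ρ^2)) * GaK),
    max (c₂ * (G2 + Ga)) (min (c₁ * (G2 - G2K)) (c₁ * Real.exp (-(2*ρ^2)) * GaK)), 1,
    lt_min (mul_pos hc₁ hG2sub) (mul_pos (mul_pos hc₁ (Real.exp_pos _)) hGaKpos),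
    le_max_right _ _, le_refl 1, ?_, ?_⟩
  · -- large t
    intro t ht1
    have ht : (0:ℝ) < t := lt_of_lt_of_le one_pos ht1
    have hE : (0:ℝ) < Real.exp (-(2*t*ρ^2)) := Real.exp_pos _
    have htp : (0:ℝ) ≤ t ^ (-((1:ℝ)/2 + 1)) := Real.rpow_nonneg ht.le _
    constructor
    · rw [hIeq t]
      calc min (c₁ * (G2 - G2K)) (c₁ * Real.exp (-(2*ρ^2)) * GaK)
            * Real.exp (-(2*t*ρ^2)) * t ^ (-((1:ℝ)/2 + 1))
          ≤ (c₁ * (G2 - G2K)) * Real.exp (-(2*t*ρ^2)) * t ^ (-((1:ℝ)/2 + 1)) :=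
            mul_le_mul_of_nonneg_right
              (mul_le_mul_of_nonneg_right (min_le_left _ _) hE.le) htp
        _ = Real.exp (-(2*t*ρ^2)) * (c₁ * (t ^ (-((p2+1)/2)) * (G2 - G2K))) := by
            rw [he2]; ring
        _ ≤ Real.exp (-(2*t*ρ^2)) * ∫ lam in Ioi (0:ℝ), Real.exp (-(2*t) * lam ^ 2) * w lam :=
            mul_le_mul_of_nonneg_left (hJlow1 t ht1) hE.le
    · rw [hIeq t]
      have hle : t ^ (-((pa+1)/2)) ≤ t ^ (-((p2+1)/2)) := by
        apply Real.rpow_le_rpow_of_exponent_le ht1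
        rw [hp2def, hpadef]; linarith
      have hJ : (∫ lam in Ioi (0:ℝ), Real.exp (-(2*t) * lam ^ 2) * w lam)
          ≤ c₂ * (G2 + Ga) * t ^ (-((p2+1)/2)) := by
        have h := hJup t ht
        nlinarith [mul_le_mul_of_nonneg_right hle hGann]
      calc Real.exp (-(2*t*ρ^2)) * ∫ lam in Ioi (0:ℝ), Real.exp (-(2*t) * lam ^ 2) * w lam
          ≤ Real.exp (-(2*t*ρ^2)) * (c₂ * (G2 + Ga) * t ^ (-((p2+1)/2))) :=
            mul_le_mul_of_nonneg_left hJ hE.le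
        _ = c₂ * (G2 + Ga) * Real.exp (-(2*t*ρ^2)) * t ^ (-((1:ℝ)/2 + 1)) := by
            rw [he2]; ring
        _ ≤ max (c₂ * (G2 + Ga)) (min (c₁ * (G2 - G2K)) (c₁ * Real.exp (-(2*ρ^2)) * GaK))
            * Real.exp (-(2*t*ρ^2)) * t ^ (-((1:ℝ)/2 + 1)) :=
            mul_le_mul_of_nonneg_right
              (mul_le_mul_of_nonneg_right (le_max_left _ _) hE.le) htp
  · -- small t
    intro t ht ht1
    have htp : (0:ℝ) ≤ t ^ (-(α + 1)) := Real.rpow_nonneg ht.le _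
    constructor
    · rw [hIeq t]
      have hE : Real.exp (-(2*ρ^2)) ≤ Real.exp (-(2*t*ρ^2)) := by
        apply Real.exp_le_exp.mpr
        nlinarith [sq_nonneg ρ, hρ]
      have hnn : (0:ℝ) ≤ c₁ * (t ^ (-((pa+1)/2)) * GaK) :=
        mul_nonneg hc₁.le (mul_nonneg (Real.rpow_nonneg ht.le _) hGaKpos.le)
      calc min (c₁ * (G2 - G2K)) (c₁ * Real.exp (-(2*ρ^2)) * GaK) * t ^ (-(α + 1))
          ≤ (c₁ * Real.exp (-(2*ρ^2)) * GaK) * t ^ (-(α + 1)) :=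
            mul_le_mul_of_nonneg_right (min_le_right _ _) htp
        _ = Real.exp (-(2*ρ^2)) * (c₁ * (t ^ (-((pa+1)/2)) * GaK)) := by
            rw [hea]; ring
        _ ≤ Real.exp (-(2*t*ρ^2)) * (c₁ * (t ^ (-((pa+1)/2)) * GaK)) :=
            mul_le_mul_of_nonneg_right hE hnn
        _ ≤ Real.exp (-(2*t*ρ^2)) * ∫ lam in Ioi (0:ℝ), Real.exp (-(2*t) * lam ^ 2) * w lam :=
            mul_le_mul_of_nonneg_left (hJlow2 t ht ht1) (Real.exp_pos _).le
    · rw [hIeq t]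
      have hle : t ^ (-((p2+1)/2)) ≤ t ^ (-((pa+1)/2)) := by
        apply Real.rpow_le_rpow_of_exponent_ge ht ht1
        rw [hp2def, hpadef]; linarith
      have hJ : (∫ lam in Ioi (0:ℝ), Real.exp (-(2*t) * lam ^ 2) * w lam)
          ≤ c₂ * (G2 + Ga) * t ^ (-((pa+1)/2)) := by
        have h := hJup t ht
        nlinarith [mul_le_mul_of_nonneg_right hle hG2nn]
      have hEx : Real.exp (-(2*t*ρ^2)) ≤ 1 := by
        apply Real.exp_le_one_iff.mpr
        nlinarith [sq_nonneg ρ]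
      calc Real.exp (-(2*t*ρ^2)) * ∫ lam in Ioi (0:ℝ), Real.exp (-(2*t) * lam ^ 2) * w lam
          ≤ 1 * (c₂ * (G2 + Ga) * t ^ (-((pa+1)/2))) :=
            mul_le_mul hEx hJ (hJnn t) one_pos.le
        _ = c₂ * (G2 + Ga) * t ^ (-(α + 1)) := by rw [hea]; ring
        _ ≤ max (c₂ * (G2 + Ga)) (min (c₁ * (G2 - G2K)) (c₁ * Real.exp (-(2*ρ^2)) * GaK))
            * t ^ (-(α + 1)) :=
            mul_le_mul_of_nonneg_right (le_max_left _ _) htp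
end
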